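/- arXiv:0805.1425 — 7 statements merged into one kernel-verified Lean document; each statement's English description precedes it below -/
import Mathlib

section
/- For any three distinct points v1, v2, v3 in a real inner product space, the squared Menger curvature c_M^2(v1,v2,v3) = 4·sin^2(angle at v1)/‖v2-v3‖^2 and the quantity c_1^2(v1,v2,v3) = (sin^2(angle at v1) + sin^2(angle at v2) + sin^2(angle at v3))/(3·diam^2(v1,v2,v3)) satisfy (1/12)·c_M^2(v1,v2,v3) ≤ c_1^2(v1,v2,v3) ≤ (1/4)·c_M^2(v1,v2,v3). -/
open InnerProductGeometry

/-!
By the law of sines, `sin² α / a² = sin² β / b² = sin² γ / c² = c_M² / 4` for the angles `α, β, γ`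
opposite the sides `a, b, c`. Hence `c_1² = (c_M² / 4) · (a² + b² + c²) / (3 diam²)`, and the
claim is `diam² ≤ a² + b² + c² ≤ 3 diam²`.
-/

namespace EuclideanGeometry

variable {V P : Type*} [NormedAddCommGroup V] [InnerProductSpace ℝ V] [MetricSpace P]
  [NormedAddTorsor V P]

theorem sin_sq_angle_add_sin_sq_angle_add_sin_sq_angle {p₁ p₂ p₃ : P} (h : p₂ ≠ p₃) :
    Real.sin (∠ p₂ p₁ p₃) ^ 2 + Real.sin (∠ p₁ p₂ p₃) ^ 2 + Real.sin (∠ p₁ p₃ p₂) ^ 2 =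
      Real.sin (∠ p₂ p₁ p₃) ^ 2 / dist p₂ p₃ ^ 2 *
        (dist p₂ p₃ ^ 2 + dist p₁ p₃ ^ 2 + dist p₁ p₂ ^ 2) := by
  have ha : dist p₂ p₃ ≠ 0 := dist_ne_zero.2 h
  have hβ := law_sin p₁ p₂ p₃
  have hγ := law_sin p₁ p₃ p₂
  rw [angle_comm p₃ p₁ p₂, dist_comm p₃ p₁] at hβ
  rw [dist_comm p₃ p₂, dist_comm p₂ p₁] at hγ
  field_simp
  linear_combination (Real.sin (∠ p₁ p₂ p₃) * dist p₂ p₃ + Real.sin (∠ p₂ p₁ p₃) * dist p₁ p₃) * hβ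
    + (Real.sin (∠ p₁ p₃ p₂) * dist p₂ p₃ + Real.sin (∠ p₂ p₁ p₃) * dist p₁ p₂) * hγ

end EuclideanGeometry

theorem max_sq_le_sq_add_sq_add_sq (x y z : ℝ) :
    max x (max y z) ^ 2 ≤ x ^ 2 + y ^ 2 + z ^ 2 := by
  rcases max_choice x (max y z) with h | h <;> rw [h]
  · nlinarith [sq_nonneg y, sq_nonneg z]
  · rcases max_choice y z with h' | h' <;> rw [h'] <;>
      nlinarith [sq_nonneg x, sq_nonneg y, sq_nonneg z]

theorem sq_add_sq_add_sq_le_three_mul_max_sq {x y z : ℝ} (hx : 0 ≤ x) (hy : 0 ≤ y) (hz : 0 ≤ z) :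
    x ^ 2 + y ^ 2 + z ^ 2 ≤ 3 * max x (max y z) ^ 2 := by
  have hxm : x ≤ max x (max y z) := le_max_left _ _
  have hym : y ≤ max x (max y z) := (le_max_left y z).trans (le_max_right _ _)
  have hzm : z ≤ max x (max y z) := (le_max_right y z).trans (le_max_right _ _)
  nlinarith [pow_le_pow_left₀ hx hxm 2, pow_le_pow_left₀ hy hym 2, pow_le_pow_left₀ hz hzm 2]

theorem stmt_0_general {H : Type*} [NormedAddCommGroup H] [InnerProductSpace ℝ H]
    (v1 v2 v3 : H) (h23 : v2 ≠ v3) :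
    (1 / 12) * (4 * Real.sin (angle (v2 - v1) (v3 - v1)) ^ 2 / ‖v2 - v3‖ ^ 2) ≤
      (Real.sin (angle (v2 - v1) (v3 - v1)) ^ 2 + Real.sin (angle (v1 - v2) (v3 - v2)) ^ 2 +
          Real.sin (angle (v1 - v3) (v2 - v3)) ^ 2) /
        (3 * max ‖v1 - v2‖ (max ‖v1 - v3‖ ‖v2 - v3‖) ^ 2) ∧
    (Real.sin (angle (v2 - v1) (v3 - v1)) ^ 2 + Real.sin (angle (v1 - v2) (v3 - v2)) ^ 2 +
          Real.sin (angle (v1 - v3) (v2 - v3)) ^ 2) /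
        (3 * max ‖v1 - v2‖ (max ‖v1 - v3‖ ‖v2 - v3‖) ^ 2) ≤
      (1 / 4) * (4 * Real.sin (angle (v2 - v1) (v3 - v1)) ^ 2 / ‖v2 - v3‖ ^ 2) := by
  have hsum := EuclideanGeometry.sin_sq_angle_add_sin_sq_angle_add_sin_sq_angle (p₁ := v1) h23
  simp only [EuclideanGeometry.angle, vsub_eq_sub, dist_eq_norm] at hsum
  rw [hsum]
  set κ := Real.sin (angle (v2 - v1) (v3 - v1)) ^ 2 / ‖v2 - v3‖ ^ 2
  set S := ‖v2 - v3‖ ^ 2 + ‖v1 - v3‖ ^ 2 + ‖v1 - v2‖ ^ 2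
  set D := max ‖v1 - v2‖ (max ‖v1 - v3‖ ‖v2 - v3‖) ^ 2
  have hκ : 0 ≤ κ := by positivity
  have hD : 0 < D := by
    have : 0 < ‖v2 - v3‖ := norm_pos_iff.2 (sub_ne_zero.2 h23)
    positivity
  have hDS : D ≤ S := by linarith [max_sq_le_sq_add_sq_add_sq ‖v1 - v2‖ ‖v1 - v3‖ ‖v2 - v3‖]
  have hS3D : S ≤ 3 * D := by
    linarith [sq_add_sq_add_sq_le_three_mul_max_sq (norm_nonneg (v1 - v2)) (norm_nonneg (v1 - v3))
      (norm_nonneg (v2 - v3))]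
  rw [show 4 * Real.sin (angle (v2 - v1) (v3 - v1)) ^ 2 / ‖v2 - v3‖ ^ 2 = 4 * κ by ring]
  constructor
  · rw [le_div_iff₀ (by positivity)]; nlinarith
  · rw [div_le_iff₀ (by positivity)]; nlinarith

/-- Comparability of the Menger curvature `c_M` and the one-dimensional
Menger-type curvature `c_1`:
`(1/12)·c_M² ≤ c_1² ≤ (1/4)·c_M²`. -/
theorem stmt_0 {H : Type*} [NormedAddCommGroup H] [InnerProductSpace ℝ H]
    (v1 v2 v3 : H) (h12 : v1 ≠ v2) (h13 : v1 ≠ v3) (h23 : v2 ≠ v3) :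
    (1 / 12) * (4 * Real.sin (angle (v2 - v1) (v3 - v1)) ^ 2 / ‖v2 - v3‖ ^ 2) ≤
      (Real.sin (angle (v2 - v1) (v3 - v1)) ^ 2 + Real.sin (angle (v1 - v2) (v3 - v2)) ^ 2 +
          Real.sin (angle (v1 - v3) (v2 - v3)) ^ 2) /
        (3 * max ‖v1 - v2‖ (max ‖v1 - v3‖ ‖v2 - v3‖) ^ 2) ∧
    (Real.sin (angle (v2 - v1) (v3 - v1)) ^ 2 + Real.sin (angle (v1 - v2) (v3 - v2)) ^ 2 +
          Real.sin (angle (v1 - v3) (v2 - v3)) ^ 2) /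
        (3 * max ‖v1 - v2‖ (max ‖v1 - v3‖ ‖v2 - v3‖) ^ 2) ≤
      (1 / 4) * (4 * Real.sin (angle (v2 - v1) (v3 - v1)) ^ 2 / ‖v2 - v3‖ ^ 2) :=
  stmt_0_general v1 v2 v3 h23
end

section
/- Let X = (x_0, …, x_{d+1}) be a (d+1)-simplex in a real inner product space with all vertices distinct, and suppose the minimum over i=1,…,d+1 of the height of X through x_i is attained (call it h_min). Then h_min ≤ (d+1)·h(X), where h(X) is the minimum height over all d+2 vertices. -/
/-!
Write a point `y` of the facet opposite `x₀` as `y = ∑ₖ wₖ xₖ` (`k = 1, …, d+1`, `∑ wₖ = 1`);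
some weight satisfies `w_j ≥ 1/(d+1)`. Then `x₀ = w_j q + ∑_{k ≠ j} wₖ xₖ` for
`q = x_j + (x₀ - y) / w_j`, so `q` lies in the facet opposite `x_j` and
`h_{x_j} ≤ ‖x₀ - y‖ / w_j ≤ (d+1) ‖x₀ - y‖`. Minimising over `y` gives
`h_{x_j} ≤ (d+1) h_{x₀}`; a minimal height through any other vertex is trivially bounded.
-/

open Metric Set Finset

lemma Fintype.exists_inv_card_le_of_sum_eq_one {ι : Type*} [Fintype ι] {w : ι → ℝ}
    (hw : ∑ i, w i = 1) : ∃ j, (Fintype.card ι : ℝ)⁻¹ ≤ w j := by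
  have hne : (univ : Finset ι).Nonempty :=
    nonempty_of_sum_ne_zero (by rw [hw]; exact one_ne_zero)
  have hcard : (0 : ℝ) < Fintype.card ι := by exact_mod_cast hne.card_pos
  obtain ⟨j, -, hj⟩ := exists_le_of_sum_le (f := fun _ => (Fintype.card ι : ℝ)⁻¹) (g := w) hne
    (by simp [hw, hcard.ne'])
  exact ⟨j, hj⟩

section

variable {V P ι : Type*} [NormedAddCommGroup V] [NormedSpace ℝ V] [MetricSpace P]
  [NormedAddTorsor V P] [Fintype ι]

lemma exists_infDist_affineSpan_insert_le {p : ι → P} {x y : P}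
    (hy : y ∈ affineSpan ℝ (range p)) :
    ∃ j, infDist (p j) (affineSpan ℝ (insert x (p '' {k | k ≠ j}))) ≤
      Fintype.card ι * dist x y := by
  classical
  obtain ⟨w, hw, rfl⟩ := eq_affineCombination_of_mem_affineSpan_of_fintype hy
  obtain ⟨j, hj⟩ := Fintype.exists_inv_card_le_of_sum_eq_one hw
  have hcard : (0 : ℝ) < Fintype.card ι := by exact_mod_cast Fintype.card_pos_iff.2 ⟨j⟩
  have hwj : 0 < w j := (inv_pos.2 hcard).trans_le hj
  set S := affineSpan ℝ (insert x (p '' {k | k ≠ j}))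
  set u : V := ∑ k ∈ univ.erase j, w k • (p k -ᵥ x)
  have hu : u ∈ S.direction := by
    refine Submodule.sum_mem _ fun k hk => Submodule.smul_mem _ _ ?_
    exact AffineSubspace.vsub_mem_direction
      (subset_affineSpan _ _ (mem_insert_of_mem _ ⟨k, ne_of_mem_erase hk, rfl⟩))
      (subset_affineSpan _ _ (mem_insert x _))
  have hsplit : univ.affineCombination ℝ p w -ᵥ x = w j • (p j -ᵥ x) + u := by
    rw [affineCombination_eq_weightedVSubOfPoint_vadd_of_sum_eq_one _ _ _ hw x, vadd_vsub,
      weightedVSubOfPoint_apply, ← add_sum_erase _ _ (mem_univ j)]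
  have hq : -(w j)⁻¹ • u +ᵥ x ∈ S :=
    AffineSubspace.vadd_mem_of_mem_direction (S.direction.smul_mem _ hu)
      (subset_affineSpan _ _ (mem_insert x _))
  refine ⟨j, ?_⟩
  calc infDist (p j) S ≤ dist (p j) (-(w j)⁻¹ • u +ᵥ x) := infDist_le_dist_of_mem hq
    _ = (w j)⁻¹ * dist x (univ.affineCombination ℝ p w) := by
      rw [dist_eq_norm_vsub V, dist_comm, dist_eq_norm_vsub V, hsplit, vsub_vadd_eq_vsub_sub,
        neg_smul, sub_neg_eq_add, ← norm_smul_of_nonneg (inv_nonneg.2 hwj.le), smul_add, smul_smul,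
        inv_mul_cancel₀ hwj.ne', one_smul]
    _ ≤ Fintype.card ι * dist x (univ.affineCombination ℝ p w) := by
      gcongr
      exact (inv_le_comm₀ hcard hwj).1 hj

lemma inf'_infDist_affineSpan_insert_le [Nonempty ι] (p : ι → P) (x : P) :
    univ.inf' univ_nonempty
        (fun j => infDist (p j) (affineSpan ℝ (insert x (p '' {k | k ≠ j})))) ≤
      Fintype.card ι * infDist x (affineSpan ℝ (range p)) := by
  have hcard : (0 : ℝ) < Fintype.card ι := by exact_mod_cast Fintype.card_pos
  rw [← div_le_iff₀' hcard, le_infDist ((range_nonempty p).mono (subset_affineSpan ℝ _))]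
  intro y hy
  obtain ⟨j, hj⟩ := exists_infDist_affineSpan_insert_le (x := x) hy
  rw [div_le_iff₀' hcard]
  exact (inf'_le _ (mem_univ j)).trans hj

end

lemma Fin.image_setOf_ne_succ {α : Type*} {n : ℕ} (X : Fin (n + 1) → α) (j : Fin n) :
    X '' {k | k ≠ j.succ} = insert (X 0) ((fun k => X k.succ) '' {k | k ≠ j}) := by
  ext
  simp [Fin.exists_fin_succ, eq_comm]

lemma Fin.image_setOf_ne_zero {α : Type*} {n : ℕ} (X : Fin (n + 1) → α) :
    X '' {k | k ≠ 0} = range fun k : Fin n => X k.succ := by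
  ext
  simp [Fin.exists_fin_succ]

theorem stmt_2_general {H : Type*} [NormedAddCommGroup H] [InnerProductSpace ℝ H] (d : ℕ)
    (X : Fin (d + 2) → H) :
    (Finset.univ.inf' Finset.univ_nonempty fun i : Fin (d + 1) =>
        Metric.infDist (X i.succ) (affineSpan ℝ (X '' {j | j ≠ i.succ}) : Set H)) ≤
      (d + 1) *
        (Finset.univ.inf' Finset.univ_nonempty fun i : Fin (d + 2) =>
          Metric.infDist (X i) (affineSpan ℝ (X '' {j | j ≠ i}) : Set H)) := by
  obtain ⟨i, -, hi⟩ := exists_mem_eq_inf' univ_nonempty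
    fun i : Fin (d + 2) => infDist (X i) (affineSpan ℝ (X '' {j | j ≠ i}) : Set H)
  rw [hi]
  induction i using Fin.cases with
  | zero =>
    simpa [Fin.image_setOf_ne_succ, Fin.image_setOf_ne_zero] using
      inf'_infDist_affineSpan_insert_le (fun k : Fin (d + 1) => X k.succ) (X 0)
  | succ i =>
    calc _ ≤ infDist (X i.succ) (affineSpan ℝ (X '' {j | j ≠ i.succ}) : Set H) :=
          inf'_le _ (mem_univ i)
      _ ≤ _ := le_mul_of_one_le_left infDist_nonneg (by linarith [(d.cast_nonneg : (0 : ℝ) ≤ d)])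

/-- For a `(d+1)`-simplex `X = (x_0, …, x_{d+1})` with distinct vertices in a real
inner product space, the minimum over `i = 1, …, d+1` of the height through `x_i`
is at most `(d+1)` times the minimal height `h(X)` over all `d+2` vertices. -/
theorem stmt_2 {H : Type*} [NormedAddCommGroup H] [InnerProductSpace ℝ H] (d : ℕ)
    (X : Fin (d + 2) → H) (hX : Function.Injective X) :
    (Finset.univ.inf' Finset.univ_nonempty fun i : Fin (d + 1) =>
        Metric.infDist (X i.succ) (affineSpan ℝ (X '' {j | j ≠ i.succ}) : Set H)) ≤
      (d + 1) *
        (Finset.univ.inf' Finset.univ_nonempty fun i : Fin (d + 2) =>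
          Metric.infDist (X i) (affineSpan ℝ (X '' {j | j ≠ i}) : Set H)) :=
  stmt_2_general d X
end

section
/- For a nondegenerate (d+1)-simplex X = (x_0, …, x_{d+1}) in ℝ^{d+1}, the minimal height satisfies h(X) ≤ √2 · ⌈(d+1)/2⌉ · D_2(X, L) for every affine d-plane L, where D_2(X,L) = (Σ_{i=0}^{d+1} dist(x_i, L)^2)^{1/2}. -/
open Finset Metric

private lemma sum_sq_le_sq' {ι : Type*} {t : Finset ι} {f : ι → ℝ}
    (h : ∀ j ∈ t, 0 ≤ f j) : ∑ j ∈ t, f j ^ 2 ≤ (∑ j ∈ t, f j) ^ 2 := by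
  calc ∑ j ∈ t, f j ^ 2 ≤ ∑ j ∈ t, f j * (∑ k ∈ t, f k) := by
        refine Finset.sum_le_sum fun j hj => ?_
        rw [sq]
        exact mul_le_mul_of_nonneg_left (Finset.single_le_sum h hj) (h j hj)
    _ = (∑ j ∈ t, f j) ^ 2 := by rw [← Finset.sum_mul, sq]

private lemma aux_key (d : ℕ) (X : Fin (d + 2) → EuclideanSpace ℝ (Fin (d + 1)))
    (y : Fin (d + 2) → EuclideanSpace ℝ (Fin (d + 1)))
    (w : Fin (d + 2) → ℝ) (hw0 : ∑ j, w j = 0) (hwy : ∑ j, w j • y j = 0)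
    (hP : (Finset.univ.filter (fun j => 0 < w j)).Nonempty)
    (hN : (Finset.univ.filter (fun j => w j < 0)).Nonempty)
    (hPcard : (Finset.univ.filter (fun j => 0 < w j)).card ≤ (d + 2) / 2) :
    (Finset.univ.inf' Finset.univ_nonempty fun i : Fin (d + 2) =>
        Metric.infDist (X i)
          (affineSpan ℝ (X '' {j | j ≠ i}) : Set (EuclideanSpace ℝ (Fin (d + 1))))) ≤
      Real.sqrt 2 * (((d + 2) / 2 : ℕ) : ℝ) *
        Real.sqrt (∑ j, (dist (X j) (y j)) ^ 2) := by
  classical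
  set P : Finset (Fin (d + 2)) := Finset.univ.filter (fun j => 0 < w j) with hPdef
  set s : ℝ := ∑ j ∈ P, w j with hsdef
  have hs : 0 < s := Finset.sum_pos (fun j hj => (Finset.mem_filter.1 hj).2) hP
  have hkpos : 0 < (P.card : ℝ) := by
    exact_mod_cast Finset.card_pos.2 hP
  -- choose i with large weight
  obtain ⟨i, hiP, hwi_ge⟩ : ∃ i ∈ P, s / P.card ≤ w i := by
    by_contra hcon
    push_neg at hcon
    have h1 : s < ∑ j ∈ P, s / P.card := Finset.sum_lt_sum_of_nonempty hP hcon
    rw [Finset.sum_const, nsmul_eq_mul, mul_div_cancel₀ _ hkpos.ne'] at h1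
    exact lt_irrefl _ h1
  have hwi : 0 < w i := (Finset.mem_filter.1 hiP).2
  set v : EuclideanSpace ℝ (Fin (d + 1)) := ∑ j, w j • X j with hvdef
  set D2 : ℝ := Real.sqrt (∑ j, (dist (X j) (y j)) ^ 2) with hD2def
  have hD2nonneg : 0 ≤ D2 := Real.sqrt_nonneg _
  -- bound on ‖v‖
  have hv_eq : v = ∑ j, w j • (X j - y j) := by
    simp [smul_sub, Finset.sum_sub_distrib, hvdef, hwy]
  have hvnorm : ‖v‖ ≤ ∑ j, |w j| * dist (X j) (y j) := by
    rw [hv_eq]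
    refine (norm_sum_le _ _).trans_eq (Finset.sum_congr rfl fun j _ => ?_)
    rw [norm_smul, Real.norm_eq_abs, dist_eq_norm]
  have hCS : ∑ j, |w j| * dist (X j) (y j) ≤ Real.sqrt (∑ j, w j ^ 2) * D2 := by
    have h1 := Finset.sum_mul_sq_le_sq_mul_sq Finset.univ (fun j => |w j|)
      (fun j => dist (X j) (y j))
    have h2 : 0 ≤ ∑ j, |w j| * dist (X j) (y j) :=
      Finset.sum_nonneg fun j _ => mul_nonneg (abs_nonneg _) dist_nonneg
    have h3 : ∑ j, |w j| * dist (X j) (y j)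
        = Real.sqrt ((∑ j, |w j| * dist (X j) (y j)) ^ 2) := (Real.sqrt_sq h2).symm
    rw [h3, hD2def, ← Real.sqrt_mul (Finset.sum_nonneg fun j _ => sq_nonneg _)]
    apply Real.sqrt_le_sqrt
    simpa [sq_abs] using h1
  have hsumsq : ∑ j, w j ^ 2 ≤ 2 * s ^ 2 := by
    have hsplit := Finset.sum_filter_add_sum_filter_not Finset.univ (fun j => 0 < w j)
      (fun j => w j ^ 2)
    have hPpart : ∑ j ∈ P, w j ^ 2 ≤ s ^ 2 :=
      sum_sq_le_sq' fun j hj => le_of_lt (Finset.mem_filter.1 hj).2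
    have hNsum : ∑ j ∈ Finset.univ.filter (fun j => ¬ 0 < w j), (- w j) = s := by
      have := Finset.sum_filter_add_sum_filter_not Finset.univ (fun j => 0 < w j) w
      rw [hw0] at this
      have : ∑ j ∈ Finset.univ.filter (fun j => ¬ 0 < w j), w j = -s := by
        rw [hsdef, hPdef]; linarith
      rw [Finset.sum_neg_distrib, this, neg_neg]
    have hNpart : ∑ j ∈ Finset.univ.filter (fun j => ¬ 0 < w j), w j ^ 2 ≤ s ^ 2 := by
      have h4 : ∑ j ∈ Finset.univ.filter (fun j => ¬ 0 < w j), w j ^ 2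
          = ∑ j ∈ Finset.univ.filter (fun j => ¬ 0 < w j), (- w j) ^ 2 := by
        simp
      rw [h4]
      calc ∑ j ∈ Finset.univ.filter (fun j => ¬ 0 < w j), (- w j) ^ 2
          ≤ (∑ j ∈ Finset.univ.filter (fun j => ¬ 0 < w j), (- w j)) ^ 2 :=
            sum_sq_le_sq' fun j hj => by
              have := (Finset.mem_filter.1 hj).2; push_neg at this; linarith
        _ = s ^ 2 := by rw [hNsum]
    calc ∑ j, w j ^ 2 = ∑ j ∈ P, w j ^ 2
          + ∑ j ∈ Finset.univ.filter (fun j => ¬ 0 < w j), w j ^ 2 := hsplit.symm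
      _ ≤ s ^ 2 + s ^ 2 := add_le_add hPpart hNpart
      _ = 2 * s ^ 2 := by ring
  have hvbound : ‖v‖ ≤ Real.sqrt 2 * s * D2 := by
    have h5 : Real.sqrt (∑ j, w j ^ 2) ≤ Real.sqrt 2 * s := by
      have := Real.sqrt_le_sqrt hsumsq
      rwa [Real.sqrt_mul (by norm_num : (0:ℝ) ≤ 2), Real.sqrt_sq hs.le] at this
    calc ‖v‖ ≤ Real.sqrt (∑ j, w j ^ 2) * D2 := hvnorm.trans hCS
      _ ≤ Real.sqrt 2 * s * D2 := mul_le_mul_of_nonneg_right h5 hD2nonneg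
  -- the affine combination of the other vertices
  set z : EuclideanSpace ℝ (Fin (d + 1)) :=
    ∑ j : {j : Fin (d + 2) // j ≠ i}, (-(w j) / w i) • X j with hzdef
  have hsub : ∀ g : Fin (d + 2) → ℝ,
      ∑ j : {j : Fin (d + 2) // j ≠ i}, g j = ∑ j ∈ Finset.univ.erase i, g j := by
    intro g
    exact (Finset.sum_subtype (p := fun j => j ≠ i) (s := Finset.univ.erase i)
      (fun x => by simp) g).symm
  have hsubE : ∀ g : Fin (d + 2) → EuclideanSpace ℝ (Fin (d + 1)),
      ∑ j : {j : Fin (d + 2) // j ≠ i}, g j = ∑ j ∈ Finset.univ.erase i, g j := by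
    intro g
    exact (Finset.sum_subtype (p := fun j => j ≠ i) (s := Finset.univ.erase i)
      (fun x => by simp) g).symm
  have herase : ∑ j ∈ Finset.univ.erase i, w j = - w i := by
    have := Finset.add_sum_erase Finset.univ w (Finset.mem_univ i)
    rw [hw0] at this; linarith
  have hωsum : ∑ j : {j : Fin (d + 2) // j ≠ i}, (-(w j) / w i) = 1 := by
    rw [hsub (fun j => -(w j) / w i)]
    rw [← Finset.sum_div, Finset.sum_neg_distrib, herase, neg_neg, div_self hwi.ne']
  have hzmem : z ∈ affineSpan ℝ (X '' {j | j ≠ i}) := by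
    have hmem := affineCombination_mem_affineSpan (k := ℝ) (s := Finset.univ)
      hωsum (fun j : {j : Fin (d + 2) // j ≠ i} => X j)
    rw [Finset.affineCombination_eq_linear_combination _ _ _ hωsum] at hmem
    have hrange : Set.range (fun j : {j : Fin (d + 2) // j ≠ i} => X ↑j)
        = X '' {j | j ≠ i} := by
      ext q
      constructor
      · rintro ⟨⟨j, hj⟩, rfl⟩; exact ⟨j, hj, rfl⟩
      · rintro ⟨j, hj, rfl⟩; exact ⟨⟨j, hj⟩, rfl⟩
    rwa [hrange] at hmem
  have hXiz : X i - z = (w i)⁻¹ • v := by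
    rw [hzdef, hsubE (fun j => (-(w j) / w i) • X j), hvdef,
      ← Finset.add_sum_erase Finset.univ (fun j => w j • X j) (Finset.mem_univ i),
      smul_add, Finset.smul_sum]
    rw [sub_eq_iff_eq_add]
    rw [smul_smul, inv_mul_cancel₀ hwi.ne', one_smul]
    have : ∀ j, (w i)⁻¹ • (w j • X j) = -((-(w j) / w i) • X j) := by
      intro j
      rw [smul_smul, ← neg_smul]
      congr 1
      field_simp
    simp_rw [this]
    rw [Finset.sum_neg_distrib]
    abel
  have hheight : Metric.infDist (X i)
      (affineSpan ℝ (X '' {j | j ≠ i}) : Set (EuclideanSpace ℝ (Fin (d + 1))))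
      ≤ ‖v‖ / w i := by
    have h6 : Metric.infDist (X i)
        (affineSpan ℝ (X '' {j | j ≠ i}) : Set (EuclideanSpace ℝ (Fin (d + 1))))
        ≤ dist (X i) z := Metric.infDist_le_dist_of_mem hzmem
    rw [dist_eq_norm, hXiz, norm_smul, Real.norm_eq_abs, abs_inv,
      abs_of_pos hwi, inv_mul_eq_div] at h6
    exact h6
  -- combine
  have hfrac : ‖v‖ / w i ≤ Real.sqrt 2 * (P.card : ℝ) * D2 := by
    have hsk : 0 < s / (P.card : ℝ) := div_pos hs hkpos
    calc ‖v‖ / w i ≤ ‖v‖ / (s / (P.card : ℝ)) :=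
          div_le_div_of_nonneg_left (norm_nonneg _) hsk hwi_ge
      _ = ‖v‖ * (P.card : ℝ) / s := by field_simp; try ring
      _ ≤ (Real.sqrt 2 * s * D2) * (P.card : ℝ) / s := by
          exact (div_le_div_iff_of_pos_right hs).2 (mul_le_mul_of_nonneg_right hvbound hkpos.le)
      _ = Real.sqrt 2 * (P.card : ℝ) * D2 := by field_simp; try ring
  have hcardle : (P.card : ℝ) ≤ (((d + 2) / 2 : ℕ) : ℝ) := by exact_mod_cast hPcard
  have hfinal : ‖v‖ / w i ≤ Real.sqrt 2 * (((d + 2) / 2 : ℕ) : ℝ) * D2 := by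
    refine hfrac.trans ?_
    apply mul_le_mul_of_nonneg_right _ hD2nonneg
    exact mul_le_mul_of_nonneg_left hcardle (Real.sqrt_nonneg 2)
  exact le_trans (Finset.inf'_le _ (Finset.mem_univ i)) (hheight.trans hfinal)

/-- For a nondegenerate `(d+1)`-simplex `X` in `ℝ^{d+1}`, the minimal height
satisfies `h(X) ≤ √2 · ⌈(d+1)/2⌉ · D_2(X, L)` for every affine `d`-plane `L`,
where `D_2(X,L) = (Σ_i dist(x_i, L)²)^{1/2}`. -/
theorem stmt_3 (d : ℕ) (X : Fin (d + 2) → EuclideanSpace ℝ (Fin (d + 1)))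
    (hX : AffineIndependent ℝ X)
    (L : AffineSubspace ℝ (EuclideanSpace ℝ (Fin (d + 1))))
    (hLdim : Module.finrank ℝ L.direction = d)
    (hLne : (L : Set (EuclideanSpace ℝ (Fin (d + 1)))).Nonempty) :
    (Finset.univ.inf' Finset.univ_nonempty fun i : Fin (d + 2) =>
        Metric.infDist (X i)
          (affineSpan ℝ (X '' {j | j ≠ i}) : Set (EuclideanSpace ℝ (Fin (d + 1))))) ≤
      Real.sqrt 2 * (((d + 2) / 2 : ℕ) : ℝ) *
        Real.sqrt
          (∑ i, Metric.infDist (X i) (L : Set (EuclideanSpace ℝ (Fin (d + 1)))) ^ 2) := by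
  classical
  -- closest points on L
  have hclosed : IsClosed (L : Set (EuclideanSpace ℝ (Fin (d + 1)))) :=
    AffineSubspace.closed_of_finiteDimensional L
  have hchoice : ∀ j : Fin (d + 2), ∃ y ∈ (L : Set (EuclideanSpace ℝ (Fin (d + 1)))),
      Metric.infDist (X j) (L : Set (EuclideanSpace ℝ (Fin (d + 1)))) = dist (X j) y :=
    fun j => hclosed.exists_infDist_eq_dist hLne (X j)
  choose y hy hyd using hchoice
  -- y is affinely dependent
  have hdep : ¬ AffineIndependent ℝ y := by
    intro h
    have hcard : Fintype.card (Fin (d + 2)) = (d + 1) + 1 := by simp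
    have hfr := h.finrank_vectorSpan hcard
    have hle : vectorSpan ℝ (Set.range y) ≤ L.direction := by
      rw [AffineSubspace.direction_eq_vectorSpan]
      exact vectorSpan_mono ℝ (Set.range_subset_iff.2 hy)
    have := Submodule.finrank_mono hle
    rw [hfr, hLdim] at this
    omega
  rw [affineIndependent_iff] at hdep
  push_neg at hdep
  obtain ⟨t, w₀, hw₀sum, hw₀y, e, het, he⟩ := hdep
  set w : Fin (d + 2) → ℝ := fun j => if j ∈ t then w₀ j else 0 with hwdef
  have hw0 : ∑ j, w j = 0 := by
    rw [hwdef]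
    simp only [Finset.sum_ite_mem, Finset.univ_inter]
    exact hw₀sum
  have hwy : ∑ j, w j • y j = 0 := by
    rw [hwdef]
    have : ∀ j, (if j ∈ t then w₀ j else 0) • y j = if j ∈ t then w₀ j • y j else 0 := by
      intro j; split <;> simp
    simp_rw [this]
    simp only [Finset.sum_ite_mem, Finset.univ_inter]
    exact hw₀y
  have hwe : w e ≠ 0 := by rw [hwdef]; simpa [het] using he
  -- positive and negative parts nonempty
  have hP : (Finset.univ.filter (fun j => 0 < w j)).Nonempty := by
    by_contra h
    rw [Finset.not_nonempty_iff_eq_empty, Finset.filter_eq_empty_iff] at h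
    have hnonpos : ∀ j ∈ Finset.univ, 0 ≤ -w j := by
      intro j _; have := h (Finset.mem_univ j); push_neg at this; linarith
    have hsum : ∑ j, -w j = 0 := by rw [Finset.sum_neg_distrib, hw0, neg_zero]
    have := (Finset.sum_eq_zero_iff_of_nonneg hnonpos).1 hsum e (Finset.mem_univ e)
    apply hwe; linarith
  have hN : (Finset.univ.filter (fun j => w j < 0)).Nonempty := by
    by_contra h
    rw [Finset.not_nonempty_iff_eq_empty, Finset.filter_eq_empty_iff] at h
    have hnonneg : ∀ j ∈ Finset.univ, 0 ≤ w j := by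
      intro j _; have := h (Finset.mem_univ j); push_neg at this; linarith
    have := (Finset.sum_eq_zero_iff_of_nonneg hnonneg).1 hw0 e (Finset.mem_univ e)
    exact hwe this
  -- disjointness and cardinality
  have hdisj : Disjoint (Finset.univ.filter (fun j => 0 < w j))
      (Finset.univ.filter (fun j => w j < 0)) := by
    rw [Finset.disjoint_filter]
    intro j _ h1; linarith
  have hcardsum : (Finset.univ.filter (fun j => 0 < w j)).card
      + (Finset.univ.filter (fun j => w j < 0)).card ≤ d + 2 := by
    rw [← Finset.card_union_of_disjoint hdisj]
    calc _ ≤ (Finset.univ : Finset (Fin (d + 2))).card := Finset.card_le_card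
            (Finset.union_subset (Finset.filter_subset _ _) (Finset.filter_subset _ _))
      _ = d + 2 := by simp
  simp_rw [hyd]
  by_cases hc : (Finset.univ.filter (fun j => 0 < w j)).card ≤ (d + 2) / 2
  · exact aux_key d X y w hw0 hwy hP hN hc
  · -- use -w
    have hNP : (Finset.univ.filter (fun j => 0 < -w j)) = Finset.univ.filter (fun j => w j < 0) := by
      ext j; simp [neg_pos]
    have hPN : (Finset.univ.filter (fun j => -w j < 0)) = Finset.univ.filter (fun j => 0 < w j) := by
      ext j; simp [neg_lt_zero]
    have hw0' : ∑ j, -w j = 0 := by rw [Finset.sum_neg_distrib, hw0, neg_zero]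
    have hwy' : ∑ j, (-w j) • y j = 0 := by
      simp_rw [neg_smul]
      rw [Finset.sum_neg_distrib, hwy, neg_zero]
    have hcard' : (Finset.univ.filter (fun j => 0 < -w j)).card ≤ (d + 2) / 2 := by
      rw [hNP]; omega
    have hP' : (Finset.univ.filter (fun j => 0 < -w j)).Nonempty := by rw [hNP]; exact hN
    have hN' : (Finset.univ.filter (fun j => -w j < 0)).Nonempty := by rw [hPN]; exact hP
    exact aux_key d X y (fun j => -w j) hw0' hwy' hP' hN' hcard'
end

section
/- Let X = (x_0,…,x_{d+1}) be a simplex in ℝ^{d+1} with convex hull K, and let L be an arbitrary affine d-plane. Then the width of K satisfies w(X) ≤ √2 · D_2(X, L), where D_2(X,L)^2 = Σ_{i=0}^{d+1} dist(x_i, L)^2. -/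
/-!
Since `L` is a hyperplane with unit normal `n`, the distance to `L` or to any parallel
hyperplane is the absolute value of an affine function `x ↦ ⟪n, x⟫ - c`. Put
`t_i = ⟪n, x_i⟫ - c_L`, so that `D_2(X, L)² = ∑ t_i²`. The parallel hyperplane at the middle
level between `min t_i` and `max t_i` keeps every vertex, hence every point of `K`, within
`(max t_i - min t_i) / 2`, and `(max t_i - min t_i)² ≤ 2 (max t_i² + min t_i²) ≤ 2 ∑ t_i²`.
-/

open Metric Module
open scoped InnerProductSpace

theorem exists_forall_two_mul_abs_sub_le {ι : Type*} [Fintype ι] (t : ι → ℝ) :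
    ∃ m : ℝ, ∀ i, 2 * |t i - m| ≤ √2 * √(∑ i, t i ^ 2) := by
  classical
  rcases isEmpty_or_nonempty ι with hι | hι
  · exact ⟨0, fun i => isEmptyElim i⟩
  obtain ⟨i₀, -, hi₀⟩ := Finset.exists_mem_eq_sup' Finset.univ_nonempty t
  obtain ⟨j₀, -, hj₀⟩ := Finset.exists_mem_eq_inf' Finset.univ_nonempty t
  refine ⟨(t i₀ + t j₀) / 2, fun i => ?_⟩
  have hi_le : t i ≤ t i₀ := hi₀ ▸ Finset.le_sup' t (Finset.mem_univ i)
  have hj_le : t j₀ ≤ t i := hj₀ ▸ Finset.inf'_le t (Finset.mem_univ i)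
  have hspread : (t i₀ - t j₀) ^ 2 ≤ 2 * ∑ i, t i ^ 2 := by
    rcases eq_or_ne i₀ j₀ with rfl | hij
    · rw [sub_self, zero_pow two_ne_zero]
      positivity
    · have hpair : t i₀ ^ 2 + t j₀ ^ 2 ≤ ∑ i, t i ^ 2 := by
        rw [← Finset.sum_pair (f := fun i => t i ^ 2) hij]
        exact Finset.sum_le_sum_of_subset_of_nonneg (Finset.subset_univ _)
          fun i _ _ => sq_nonneg (t i)
      nlinarith [sq_nonneg (t i₀ + t j₀)]
  have hmid : |t i - (t i₀ + t j₀) / 2| ≤ (t i₀ - t j₀) / 2 :=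
    abs_le.2 ⟨by linarith, by linarith⟩
  calc 2 * |t i - (t i₀ + t j₀) / 2| ≤ t i₀ - t j₀ := by linarith
    _ ≤ |t i₀ - t j₀| := le_abs_self _
    _ ≤ √(2 * ∑ i, t i ^ 2) := Real.abs_le_sqrt hspread
    _ = √2 * √(∑ i, t i ^ 2) := Real.sqrt_mul zero_le_two _

section InnerProductSpace

variable {E : Type*} [NormedAddCommGroup E] [InnerProductSpace ℝ E]

theorem infDist_mk'_orthogonal_singleton {n : E} (hn : ‖n‖ = 1) (x p : E) :
    infDist x (AffineSubspace.mk' p (ℝ ∙ n)ᗮ : Set E) = |⟪n, x⟫_ℝ - ⟪n, p⟫_ℝ| := by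
  have hnn : ⟪n, n⟫_ℝ = 1 := by rw [real_inner_self_eq_norm_sq, hn, one_pow]
  have mem_iff (y : E) : y ∈ AffineSubspace.mk' p (ℝ ∙ n)ᗮ ↔ ⟪n, y⟫_ℝ = ⟪n, p⟫_ℝ := by
    rw [AffineSubspace.mem_mk', vsub_eq_sub, Submodule.mem_orthogonal_singleton_iff_inner_right,
      inner_sub_right, sub_eq_zero]
  refine le_antisymm ?_ ((le_infDist ⟨p, AffineSubspace.self_mem_mk' _ _⟩).2 fun y hy => ?_)
  · set c := ⟪n, x⟫_ℝ - ⟪n, p⟫_ℝ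
    have hfoot : x - c • n ∈ AffineSubspace.mk' p (ℝ ∙ n)ᗮ := by
      rw [mem_iff, inner_sub_right, real_inner_smul_right, hnn]
      ring
    calc infDist x _ ≤ dist x (x - c • n) := infDist_le_dist_of_mem hfoot
      _ = |c| := by rw [dist_eq_norm, sub_sub_cancel, norm_smul, hn, mul_one, Real.norm_eq_abs]
  · rw [SetLike.mem_coe, mem_iff] at hy
    calc |⟪n, x⟫_ℝ - ⟪n, p⟫_ℝ| = |⟪n, x - y⟫_ℝ| := by rw [inner_sub_right, hy]
      _ ≤ ‖n‖ * ‖x - y‖ := abs_real_inner_le_norm _ _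
      _ = dist x y := by rw [hn, one_mul, dist_eq_norm]

theorem Submodule.exists_norm_eq_one_eq_orthogonal_singleton [FiniteDimensional ℝ E]
    {V : Submodule ℝ E} (hV : finrank ℝ V + 1 = finrank ℝ E) :
    ∃ n : E, ‖n‖ = 1 ∧ V = (ℝ ∙ n)ᗮ := by
  have hVperp : finrank ℝ Vᗮ = 1 := by
    have := V.finrank_add_finrank_orthogonal
    omega
  obtain ⟨v, hv, hv0⟩ := Vᗮ.exists_mem_ne_zero_of_ne_bot (Submodule.one_le_finrank_iff.mp hVperp.ge)
  refine ⟨‖v‖⁻¹ • v, norm_smul_inv_norm hv0, ?_⟩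
  have hspan : (ℝ ∙ (‖v‖⁻¹ • v)) = Vᗮ := by
    refine Submodule.eq_of_le_of_finrank_eq ?_ ?_
    · exact (Submodule.span_singleton_le_iff_mem _ _).2 (Vᗮ.smul_mem _ hv)
    · rw [hVperp, finrank_span_singleton (by simpa using hv0)]
  rw [hspan, Submodule.orthogonal_orthogonal]

theorem abs_sub_le_of_mem_convexHull {ι : Type*} {X : ι → E} (φ : E →ₗ[ℝ] ℝ) {c r : ℝ}
    (hX : ∀ i, |φ (X i) - c| ≤ r) {x : E} (hx : x ∈ convexHull ℝ (Set.range X)) :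
    |φ x - c| ≤ r := by
  have hsub : Set.range X ⊆ φ ⁻¹' closedBall c r := by
    rintro _ ⟨i, rfl⟩
    simpa [Real.dist_eq] using hX i
  simpa [Real.dist_eq] using convexHull_min hsub ((convex_closedBall c r).linear_preimage φ) hx

theorem AffineSubspace.exists_parallel_two_mul_iSup_infDist_le [FiniteDimensional ℝ E]
    {ι : Type*} [Fintype ι] (X : ι → E) (L : AffineSubspace ℝ E)
    (hL : finrank ℝ L.direction + 1 = finrank ℝ E) (hLne : (L : Set E).Nonempty) :
    ∃ L' : AffineSubspace ℝ E, L'.direction = L.direction ∧ (L' : Set E).Nonempty ∧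
      2 * ⨆ p : convexHull ℝ (Set.range X), infDist (p : E) L' ≤
        √2 * √(∑ i, infDist (X i) L ^ 2) := by
  obtain ⟨p₀, hp₀⟩ := hLne
  obtain ⟨n, hn, hdir⟩ := L.direction.exists_norm_eq_one_eq_orthogonal_singleton hL
  have hdistL (i : ι) : infDist (X i) L = |⟪n, X i⟫_ℝ - ⟪n, p₀⟫_ℝ| := by
    rw [← AffineSubspace.mk'_eq hp₀, hdir]
    exact infDist_mk'_orthogonal_singleton hn _ _
  obtain ⟨m, hm⟩ := exists_forall_two_mul_abs_sub_le fun i => ⟪n, X i⟫_ℝ - ⟪n, p₀⟫_ℝ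
  set q := p₀ + m • n
  refine ⟨AffineSubspace.mk' q L.direction, AffineSubspace.direction_mk' _ _,
    ⟨q, AffineSubspace.self_mem_mk' _ _⟩, ?_⟩
  have hq : ⟪n, q⟫_ℝ = ⟪n, p₀⟫_ℝ + m := by
    rw [inner_add_right, real_inner_smul_right, real_inner_self_eq_norm_sq, hn]
    ring
  simp only [hdistL, sq_abs]
  rw [← le_div_iff₀' two_pos]
  refine Real.iSup_le (fun p => ?_) (by positivity)
  rw [hdir, infDist_mk'_orthogonal_singleton hn, hq]
  refine abs_sub_le_of_mem_convexHull (innerₛₗ ℝ n) (fun i => ?_) p.2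
  rw [innerₛₗ_apply_apply, le_div_iff₀' two_pos, ← sub_sub]
  exact hm i

end InnerProductSpace

/-- The width of the convex hull of a simplex `X = (x_0,…,x_{d+1})` in `ℝ^{d+1}`
is at most `√2 · D_2(X, L)` for any affine `d`-plane `L`.  The width is twice the
infimum over affine `d`-planes `L'` of the maximal distance from the hull to `L'`. -/
theorem stmt_4 (d : ℕ) (X : Fin (d + 2) → EuclideanSpace ℝ (Fin (d + 1)))
    (L : AffineSubspace ℝ (EuclideanSpace ℝ (Fin (d + 1))))
    (hLdim : Module.finrank ℝ L.direction = d)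
    (hLne : (L : Set (EuclideanSpace ℝ (Fin (d + 1)))).Nonempty) :
    (⨅ L' : {M : AffineSubspace ℝ (EuclideanSpace ℝ (Fin (d + 1))) //
        Module.finrank ℝ M.direction = d ∧ (M : Set (EuclideanSpace ℝ (Fin (d + 1)))).Nonempty},
      2 * ⨆ p : convexHull ℝ (Set.range X),
        Metric.infDist (p : EuclideanSpace ℝ (Fin (d + 1)))
          ((L' : AffineSubspace ℝ (EuclideanSpace ℝ (Fin (d + 1)))) :
            Set (EuclideanSpace ℝ (Fin (d + 1))))) ≤
      Real.sqrt 2 *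
        Real.sqrt
          (∑ i, Metric.infDist (X i) (L : Set (EuclideanSpace ℝ (Fin (d + 1)))) ^ 2) := by
  obtain ⟨L', hdir, hL'ne, hL'⟩ := L.exists_parallel_two_mul_iSup_infDist_le X
    (by rw [hLdim, finrank_euclideanSpace_fin]) hLne
  refine ciInf_le_of_le ⟨0, ?_⟩ ⟨L', hdir ▸ hLdim, hL'ne⟩ hL'
  rintro _ ⟨M, rfl⟩
  exact mul_nonneg zero_le_two (Real.iSup_nonneg fun _ => infDist_nonneg)
end

section
/- Let X = (x_0,…,x_{d+1}) be a (d+1)-simplex with distinct vertices in a real Hilbert space. Then p_d sin_{x_0}(X) ≤ (2·(d+1)/scale_{x_0}(X)) · h(X)/diam(X), where h(X) is the minimal height of the simplex and scale_{x_0}(X) is the ratio of the minimal to maximal edge length at x_0. -/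
/-- The `n`-content: square root of the Gram determinant of the vectors `v`. -/
noncomputable def gramContent {H : Type*} [NormedAddCommGroup H] [InnerProductSpace ℝ H]
    {n : ℕ} (v : Fin n → H) : ℝ :=
  Real.sqrt (Matrix.det (Matrix.of fun i j => (inner ℝ (v i) (v j) : ℝ)))

/-!
Write `v_k = x_k - x_0`. Removing one vector from a Gram determinant divides it by the squared
distance of that vector to the span of the others, so by Hadamard's inequality the polar sine is at
most `dist(v_i, span(v_k, k ≠ i)) / ‖v_i‖ ≤ h_{x_i}(X) / min_k ‖v_k‖` for every `i ≥ 1`.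
It remains to find an `i ≥ 1` with `h_{x_i}(X) ≤ (d+1) h(X)`, which only needs care when the
minimal height is the one at `x_0`. Writing a point `y` of the facet opposite `x_0` as an affine
combination `∑ t_k x_k`, some weight is at least `1/(d+1)`, and moving `x_i` by `(y - x_0)/t_i`
lands in the facet opposite `x_i`; hence `h_{x_i}(X) ≤ (d+1)‖x_0 - y‖`.
Finally `diam(X) ≤ 2 max_k ‖v_k‖`.
-/

open Finset Metric Submodule Matrix

section

variable {H : Type*} [NormedAddCommGroup H] [InnerProductSpace ℝ H]

theorem Submodule.infDist_eq_norm_sub_starProjection (K : Submodule ℝ H)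
    [K.HasOrthogonalProjection] (x : H) : infDist x K = ‖x - K.starProjection x‖ := by
  rw [starProjection_minimal, infDist_eq_iInf]
  simp only [dist_eq_norm]
  rfl

theorem Matrix.det_gram_eq_mul_infDist_sq {n : ℕ} (v : Fin (n + 1) → H) (i : Fin (n + 1)) :
    (gram ℝ v).det = (gram ℝ (v ∘ i.succAbove)).det *
      infDist (v i) (span ℝ (Set.range (v ∘ i.succAbove))) ^ 2 := by
  set K := span ℝ (Set.range (v ∘ i.succAbove))
  have : FiniteDimensional ℝ K := FiniteDimensional.span_of_finite ℝ (Set.finite_range _)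
  set q := v i - K.starProjection (v i)
  obtain ⟨c, hc⟩ := (mem_span_range_iff_exists_fun ℝ).1 (K.starProjection_apply_mem (v i))
  -- Row reduction turns row `i` into `‖q‖² eᵢ`; expanding along it leaves the minor at `(i, i)`.
  set w : Fin (n + 1) → ℝ := i.insertNth 1 (-c)
  have hcomb : ∑ j, w j • gram ℝ v j = fun j => inner ℝ q (v j) := by
    ext j
    simp only [Finset.sum_apply, Pi.smul_apply, gram_apply, smul_eq_mul, ← real_inner_smul_left,
      ← sum_inner]
    rw [Fin.sum_univ_succAbove _ i]
    simp [w, q, ← hc, sub_eq_add_neg]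
  have hrow : (fun j => inner ℝ q (v j)) = ‖q‖ ^ 2 • Pi.single i 1 := by
    ext j
    rcases eq_or_ne j i with rfl | hj
    · have horth : inner ℝ q (K.starProjection (v j)) = 0 :=
        K.starProjection_inner_eq_zero _ _ (K.starProjection_apply_mem _)
      have hsplit : inner ℝ q (v j) = inner ℝ q q + inner ℝ q (K.starProjection (v j)) := by
        rw [← inner_add_right, sub_add_cancel]
      simp [hsplit, horth]
    · obtain ⟨k, rfl⟩ := Fin.exists_succAbove_eq hj
      simpa [hj] using K.starProjection_inner_eq_zero _ _ (subset_span ⟨k, rfl⟩)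
  have hdet := det_updateRow_sum (gram ℝ v) i w
  rw [hcomb, hrow, det_updateRow_smul, ← adjugate_apply, adjugate_fin_succ_eq_det_submatrix,
    show w i = 1 from Fin.insertNth_apply_same .., one_smul] at hdet
  rw [← hdet, K.infDist_eq_norm_sub_starProjection, Even.neg_one_pow ⟨i, rfl⟩, one_mul, mul_comm]
  rfl

theorem Matrix.det_gram_le_prod_norm_sq {n : ℕ} (v : Fin n → H) :
    (gram ℝ v).det ≤ ∏ j, ‖v j‖ ^ 2 := by
  induction n with
  | zero => simp
  | succ n ih =>
    rw [det_gram_eq_mul_infDist_sq v 0, Fin.prod_univ_succAbove _ 0, mul_comm (‖v 0‖ ^ 2)]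
    have hdist : infDist (v 0) (span ℝ (Set.range (v ∘ Fin.succAbove 0))) ≤ ‖v 0‖ := by
      simpa using infDist_le_dist_of_mem (x := v 0) (zero_mem (span ℝ _))
    exact mul_le_mul (ih _) (pow_le_pow_left₀ infDist_nonneg hdist 2) (sq_nonneg _)
      (prod_nonneg fun _ _ => sq_nonneg _)

theorem Matrix.sqrt_det_gram_le {n : ℕ} (v : Fin (n + 1) → H) (i : Fin (n + 1)) :
    √(gram ℝ v).det ≤
      (∏ k, ‖v (i.succAbove k)‖) * infDist (v i) (span ℝ (Set.range (v ∘ i.succAbove))) := by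
  rw [det_gram_eq_mul_infDist_sq v i, Real.sqrt_mul ((posSemidef_gram ℝ _).det_nonneg),
    Real.sqrt_sq infDist_nonneg]
  refine mul_le_mul_of_nonneg_right ?_ infDist_nonneg
  calc √(gram ℝ (v ∘ i.succAbove)).det ≤ √(∏ k, ‖v (i.succAbove k)‖ ^ 2) :=
        Real.sqrt_le_sqrt (det_gram_le_prod_norm_sq _)
    _ = ∏ k, ‖v (i.succAbove k)‖ := by
        rw [prod_pow, Real.sqrt_sq (prod_nonneg fun _ _ => norm_nonneg _)]

theorem Matrix.sqrt_det_gram_div_prod_le {n : ℕ} (v : Fin (n + 1) → H) (i : Fin (n + 1)) :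
    √(gram ℝ v).det / ∏ j, ‖v j‖ ≤
      infDist (v i) (span ℝ (Set.range (v ∘ i.succAbove))) / ‖v i‖ := by
  have hP : 0 ≤ ∏ k, ‖v (i.succAbove k)‖ := prod_nonneg fun _ _ => norm_nonneg _
  rw [Fin.prod_univ_succAbove _ i]
  rcases (mul_nonneg (norm_nonneg (v i)) hP).eq_or_lt with hzero | hpos
  · rw [← hzero, div_zero]
    exact div_nonneg infDist_nonneg (norm_nonneg _)
  rw [div_le_div_iff₀ hpos (pos_of_mul_pos_left hpos hP)]
  calc √(gram ℝ v).det * ‖v i‖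
      ≤ (∏ k, ‖v (i.succAbove k)‖) * infDist (v i) (span ℝ (Set.range (v ∘ i.succAbove))) *
          ‖v i‖ := mul_le_mul_of_nonneg_right (sqrt_det_gram_le v i) (norm_nonneg _)
    _ = _ := by ring

theorem infDist_sub_le_infDist_affineSpan {s : Set H} {p : H} (hp : p ∈ s) {K : Submodule ℝ H}
    (hK : ∀ y ∈ s, y - p ∈ K) (x : H) : infDist (x - p) K ≤ infDist x (affineSpan ℝ s) := by
  have hle : affineSpan ℝ s ≤ AffineSubspace.mk' p K :=
    affineSpan_le.2 fun y hy => (AffineSubspace.mem_mk' ..).2 (hK y hy)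
  refine (le_infDist ⟨p, subset_affineSpan ℝ s hp⟩).2 fun y hy => ?_
  calc infDist (x - p) K ≤ dist (x - p) (y - p) :=
        infDist_le_dist_of_mem ((AffineSubspace.mem_mk' ..).1 (hle hy))
    _ = dist x y := dist_sub_right ..

theorem abs_mul_infDist_le_norm {ι : Type*} [Fintype ι] [DecidableEq ι] {A : AffineSubspace ℝ H}
    {P : ι → H} {x₀ : H} {t : ι → ℝ} {i : ι} (hx₀ : x₀ ∈ A) (hP : ∀ k ≠ i, P k ∈ A)
    (ht : ∑ k, t k = 1) : |t i| * infDist (P i) A ≤ ‖∑ k, t k • P k - x₀‖ := by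
  rcases eq_or_ne (t i) 0 with hti | hti
  · simp [hti]
  set S := ∑ k ∈ univ.erase i, t k • (P k - x₀)
  have hsum : ∑ k, t k • P k - x₀ = t i • (P i - x₀) + S := by
    rw [add_sum_erase univ (fun k => t k • (P k - x₀)) (mem_univ i)]
    simp [smul_sub, sum_sub_distrib, ← sum_smul, ht]
  -- dividing by `t i` cancels the `P i` term of `∑ t_k (P_k - x₀)`
  have hz : P i - (t i)⁻¹ • (∑ k, t k • P k - x₀) ∈ A := by
    have hS : S ∈ A.direction := sum_mem fun k hk =>
      smul_mem _ _ (AffineSubspace.vsub_mem_direction (hP k (ne_of_mem_erase hk)) hx₀)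
    have : P i - (t i)⁻¹ • (∑ k, t k • P k - x₀) = (-(t i)⁻¹ • S) +ᵥ x₀ := by
      rw [hsum, smul_add, smul_smul, inv_mul_cancel₀ hti, one_smul, vadd_eq_add, neg_smul]
      abel
    exact this ▸ AffineSubspace.vadd_mem_of_mem_direction (smul_mem _ _ hS) hx₀
  calc |t i| * infDist (P i) A
      ≤ |t i| * dist (P i) (P i - (t i)⁻¹ • (∑ k, t k • P k - x₀)) :=
        mul_le_mul_of_nonneg_left (infDist_le_dist_of_mem hz) (abs_nonneg _)
    _ = ‖∑ k, t k • P k - x₀‖ := by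
        rw [dist_eq_norm, sub_sub_cancel, norm_smul, norm_inv, Real.norm_eq_abs,
          mul_inv_cancel_left₀ (abs_ne_zero.2 hti)]

noncomputable def vertexHeight {ι : Type*} (X : ι → H) (i : ι) : ℝ :=
  infDist (X i) (affineSpan ℝ (X '' {j | j ≠ i}))

theorem exists_vertexHeight_succ_le_mul_dist {n : ℕ} (X : Fin (n + 2) → H) {y : H}
    (hy : y ∈ affineSpan ℝ (X '' {j | j ≠ 0})) :
    ∃ i : Fin (n + 1), vertexHeight X i.succ ≤ (n + 1) * dist (X 0) y := by
  rw [show X '' {j | j ≠ 0} = Set.range (X ∘ Fin.succ) by rw [Set.range_comp, Fin.range_succ]; rfl]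
    at hy
  obtain ⟨t, ht, rfl⟩ := eq_affineCombination_of_mem_affineSpan_of_fintype hy
  have hsum : ∑ _i : Fin (n + 1), (1 / (n + 1) : ℝ) = ∑ i, t i := by simp [ht]; field_simp
  obtain ⟨i, -, hti⟩ := exists_le_of_sum_le univ_nonempty hsum.le
  refine ⟨i, ?_⟩
  have hheight := abs_mul_infDist_le_norm (A := affineSpan ℝ (X '' {j | j ≠ i.succ}))
    (P := X ∘ Fin.succ) (x₀ := X 0) (i := i)
    (subset_affineSpan ℝ _ ⟨0, (Fin.succ_ne_zero i).symm, rfl⟩)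
    (fun k hk => subset_affineSpan ℝ _ ⟨k.succ, (Fin.succ_injective _).ne hk, rfl⟩) ht
  rw [abs_of_pos (lt_of_lt_of_le (by positivity) hti)] at hheight
  rw [univ.affineCombination_eq_linear_combination _ _ ht, dist_comm, dist_eq_norm]
  have hh : 0 ≤ vertexHeight X i.succ := infDist_nonneg
  calc vertexHeight X i.succ = (n + 1) * (1 / (n + 1) * vertexHeight X i.succ) := by field_simp
    _ ≤ (n + 1) * (t i * vertexHeight X i.succ) := by gcongr
    _ ≤ (n + 1) * ‖∑ k, t k • X k.succ - X 0‖ := by gcongr; exact hheight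

theorem exists_vertexHeight_succ_le {n : ℕ} (X : Fin (n + 2) → H) :
    ∃ i : Fin (n + 1), vertexHeight X i.succ ≤ (n + 1) * vertexHeight X 0 := by
  obtain ⟨i, -, hi⟩ :=
    exists_mem_eq_inf' univ_nonempty fun i : Fin (n + 1) => vertexHeight X i.succ
  refine ⟨i, ?_⟩
  rw [← hi, ← div_le_iff₀' (by positivity)]
  have hne : (affineSpan ℝ (X '' {j | j ≠ 0}) : Set H).Nonempty :=
    ⟨X (Fin.succ 0), subset_affineSpan ℝ _ ⟨_, Fin.succ_ne_zero 0, rfl⟩⟩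
  refine (le_infDist hne).2 fun y hy => ?_
  obtain ⟨j, hj⟩ := exists_vertexHeight_succ_le_mul_dist X hy
  exact div_le_of_le_mul₀ (by positivity) dist_nonneg
    ((inf'_le _ (mem_univ j)).trans (hj.trans_eq (mul_comm _ _)))

theorem exists_vertexHeight_succ_le_mul_inf' {n : ℕ} (X : Fin (n + 2) → H) :
    ∃ i : Fin (n + 1),
      vertexHeight X i.succ ≤ (n + 1) * univ.inf' univ_nonempty (vertexHeight X) := by
  obtain ⟨j, -, hj⟩ := exists_mem_eq_inf' univ_nonempty (vertexHeight X)
  rw [hj]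
  rcases Fin.eq_zero_or_eq_succ j with rfl | ⟨k, rfl⟩
  · exact exists_vertexHeight_succ_le X
  · have : 0 ≤ vertexHeight X k.succ := infDist_nonneg
    exact ⟨k, by nlinarith⟩

theorem infDist_span_le_vertexHeight_succ {n : ℕ} (X : Fin (n + 2) → H) (i : Fin (n + 1)) :
    infDist (X i.succ - X 0) (span ℝ (Set.range fun k => X (i.succAbove k).succ - X 0)) ≤
      vertexHeight X i.succ := by
  refine infDist_sub_le_infDist_affineSpan
    (s := X '' {j | j ≠ i.succ}) ⟨0, (Fin.succ_ne_zero i).symm, rfl⟩ ?_ _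
  rintro _ ⟨j, hj, rfl⟩
  rcases Fin.eq_zero_or_eq_succ j with rfl | ⟨k, rfl⟩
  · rw [sub_self]
    exact zero_mem _
  · obtain ⟨l, rfl⟩ := Fin.exists_succAbove_eq fun h => hj (congrArg Fin.succ h)
    exact subset_span ⟨l, rfl⟩

end

theorem sup'_dist_le_two_mul_sup'_norm_sub {E : Type*} [SeminormedAddCommGroup E] {n : ℕ}
    (X : Fin (n + 2) → E) :
    univ.sup' univ_nonempty (fun p : Fin (n + 2) × Fin (n + 2) => dist (X p.1) (X p.2)) ≤
      2 * univ.sup' univ_nonempty fun i : Fin (n + 1) => ‖X i.succ - X 0‖ := by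
  set M := univ.sup' univ_nonempty fun i : Fin (n + 1) => ‖X i.succ - X 0‖
  have hX0 (j : Fin (n + 2)) : dist (X j) (X 0) ≤ M := by
    rcases Fin.eq_zero_or_eq_succ j with rfl | ⟨k, rfl⟩
    · rw [dist_self]
      exact (norm_nonneg _).trans (le_sup' (fun i : Fin (n + 1) => ‖X i.succ - X 0‖) (mem_univ 0))
    · exact (dist_eq_norm _ _).trans_le (le_sup' (fun i => ‖X i.succ - X 0‖) (mem_univ k))
  exact sup'_le _ _ fun p _ =>
    (dist_triangle_right _ _ (X 0)).trans (by linarith [hX0 p.1, hX0 p.2])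

theorem stmt_6_general {H : Type*} [NormedAddCommGroup H] [InnerProductSpace ℝ H]
    (d : ℕ) (X : Fin (d + 2) → H) (hX : Function.Injective X) :
    gramContent (fun i : Fin (d + 1) => X i.succ - X 0) /
        ∏ i : Fin (d + 1), ‖X i.succ - X 0‖ ≤
      2 * (d + 1) /
          ((Finset.univ.inf' Finset.univ_nonempty fun i : Fin (d + 1) => ‖X i.succ - X 0‖) /
            (Finset.univ.sup' Finset.univ_nonempty fun i : Fin (d + 1) => ‖X i.succ - X 0‖)) *
        ((Finset.univ.inf' Finset.univ_nonempty fun i : Fin (d + 2) =>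
            Metric.infDist (X i) (affineSpan ℝ (X '' {j | j ≠ i}) : Set H)) /
          Finset.univ.sup' Finset.univ_nonempty
            (fun p : Fin (d + 2) × Fin (d + 2) => dist (X p.1) (X p.2))) := by
  set v : Fin (d + 1) → H := fun i => X i.succ - X 0
  set m := univ.inf' univ_nonempty fun i => ‖v i‖
  set M := univ.sup' univ_nonempty fun i => ‖v i‖
  set h := univ.inf' univ_nonempty (vertexHeight X)
  set D := univ.sup' univ_nonempty fun p : Fin (d + 2) × Fin (d + 2) => dist (X p.1) (X p.2)
  have hv (i : Fin (d + 1)) : 0 < ‖v i‖ :=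
    norm_pos_iff.2 (sub_ne_zero.2 (hX.ne (Fin.succ_ne_zero i)))
  have hm : 0 < m := (lt_inf'_iff _).2 fun i _ => hv i
  have hD : 0 < D := (lt_sup'_iff _).2
    ⟨(Fin.succ 0, 0), mem_univ _, dist_pos.2 (hX.ne (Fin.succ_ne_zero (0 : Fin (d + 1))))⟩
  have hh : 0 ≤ h := le_inf' _ _ fun _ _ => infDist_nonneg
  obtain ⟨i, hi⟩ := exists_vertexHeight_succ_le_mul_inf' X
  calc gramContent v / ∏ j, ‖v j‖
      ≤ infDist (v i) (span ℝ (Set.range (v ∘ i.succAbove))) / ‖v i‖ :=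
        sqrt_det_gram_div_prod_le v i
    _ ≤ vertexHeight X i.succ / ‖v i‖ := by gcongr; exact infDist_span_le_vertexHeight_succ X i
    _ ≤ (d + 1) * h / m := div_le_div₀ (by positivity) hi hm (inf'_le _ (mem_univ i))
    _ = (d + 1) * h / m * 1 := (mul_one _).symm
    _ ≤ (d + 1) * h / m * (2 * M / D) := by
        gcongr
        rw [le_div_iff₀ hD, one_mul]
        exact sup'_dist_le_two_mul_sup'_norm_sub X
    _ = 2 * (d + 1) / (m / M) * (h / D) := by field_simp

/-- Bound on the polar sine by the minimal height:
`p_d sin_{x_0}(X) ≤ (2·(d+1)/scale_{x_0}(X)) · h(X)/diam(X)`. -/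
theorem stmt_6 {H : Type*} [NormedAddCommGroup H] [InnerProductSpace ℝ H] [CompleteSpace H]
    (d : ℕ) (X : Fin (d + 2) → H) (hX : Function.Injective X) :
    gramContent (fun i : Fin (d + 1) => X i.succ - X 0) /
        ∏ i : Fin (d + 1), ‖X i.succ - X 0‖ ≤
      2 * (d + 1) /
          ((Finset.univ.inf' Finset.univ_nonempty fun i : Fin (d + 1) => ‖X i.succ - X 0‖) /
            (Finset.univ.sup' Finset.univ_nonempty fun i : Fin (d + 1) => ‖X i.succ - X 0‖)) *
        ((Finset.univ.inf' Finset.univ_nonempty fun i : Fin (d + 2) =>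
            Metric.infDist (X i) (affineSpan ℝ (X '' {j | j ≠ i}) : Set H)) /
          Finset.univ.sup' Finset.univ_nonempty
            (fun p : Fin (d + 2) × Fin (d + 2) => dist (X p.1) (X p.2))) :=
  stmt_6_general d X hX
end

section
/- The product formula for the polar sine: if X = (x_0,…,x_{d+1}) has distinct, affinely independent vertices in a real Hilbert space and 1 ≤ i ≤ d+1, then p_d sin_{x_0}(X) = sin(θ_i(X)) · p_{d−1} sin_{x_0}(X(i)), where θ_i(X) is the elevation angle of x_i with respect to the affine span of the remaining vertices X(i), i.e., sin(θ_i(X)) = dist(x_i, aff(X(i)))/‖x_i − x_0‖. -/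
open Matrix Submodule EuclideanGeometry
open scoped InnerProductSpace

section Gram

variable {E : Type*} [NormedAddCommGroup E] [InnerProductSpace ℝ E]

theorem det_gram_update_sum {ι : Type*} [Fintype ι] [DecidableEq ι] (u : ι → E) (k : ι)
    (c : ι → ℝ) :
    (gram ℝ (Function.update u k (∑ i, c i • u i))).det = c k ^ 2 * (gram ℝ u).det := by
  set A := (gram ℝ u).updateCol k fun i => ∑ l, c l • gram ℝ u i l
  have hA : A.det = c k * (gram ℝ u).det := det_updateCol_sum _ k c
  have hB :
      gram ℝ (Function.update u k (∑ i, c i • u i)) = A.updateRow k (∑ l, c l • A l) := by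
    ext i j
    by_cases hi : i = k <;> by_cases hj : j = k <;>
      simp [A, hi, hj, Finset.sum_apply, sum_inner, inner_sum, real_inner_smul_left,
        real_inner_smul_right, Finset.mul_sum, -inner_self_eq_norm_sq_to_K]
    exact Finset.sum_comm.trans (by simp only [mul_left_comm])
  rw [hB, det_updateRow_sum, hA, smul_eq_mul]; ring

variable {n : ℕ}

theorem det_gram_update_sub_of_mem_span (u : Fin (n + 1) → E) (k : Fin (n + 1)) {w : E}
    (hw : w ∈ span ℝ (Set.range (u ∘ k.succAbove))) :
    (gram ℝ (Function.update u k (u k - w))).det = (gram ℝ u).det := by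
  obtain ⟨a, rfl⟩ := (mem_span_range_iff_exists_fun ℝ).1 hw
  have hsum : u k - ∑ j, a j • (u ∘ k.succAbove) j =
      ∑ i, Fin.insertNth (α := fun _ => ℝ) k 1 (-a) i • u i := by
    simp [Fin.sum_univ_succAbove _ k, sub_eq_add_neg]
  rw [hsum, det_gram_update_sum, Fin.insertNth_apply_same, one_pow, one_mul]

theorem det_gram_eq_norm_sq_mul_of_inner_eq_zero (u : Fin (n + 1) → E) (k : Fin (n + 1))
    (h : ∀ j, ⟪u k, u (k.succAbove j)⟫_ℝ = 0) :
    (gram ℝ u).det = ‖u k‖ ^ 2 * (gram ℝ (u ∘ k.succAbove)).det := by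
  rw [det_succ_row _ k, Fintype.sum_eq_single k fun j hj => ?_]
  · have hsub :
        (gram ℝ u).submatrix k.succAbove k.succAbove = gram ℝ (u ∘ k.succAbove) := rfl
    simp [hsub, ← two_mul, pow_mul]
  · obtain ⟨j, rfl⟩ := Fin.exists_succAbove_eq hj
    simp [h j]

theorem gramContent_eq_norm_sub_mul (u : Fin (n + 1) → E) (k : Fin (n + 1)) {w : E}
    (hw : w ∈ span ℝ (Set.range (u ∘ k.succAbove)))
    (horth : u k - w ∈ (span ℝ (Set.range (u ∘ k.succAbove)))ᗮ) :
    gramContent u = ‖u k - w‖ * gramContent (u ∘ k.succAbove) := by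
  have hinner (j : Fin n) : ⟪Function.update u k (u k - w) k,
      Function.update u k (u k - w) (k.succAbove j)⟫_ℝ = 0 := by
    rw [Function.update_self, Function.update_of_ne (k.succAbove_ne j)]
    exact inner_left_of_mem_orthogonal (subset_span (Set.mem_range_self j)) horth
  change √(gram ℝ u).det = ‖u k - w‖ * √(gram ℝ (u ∘ k.succAbove)).det
  rw [← det_gram_update_sub_of_mem_span u k hw,
    det_gram_eq_norm_sq_mul_of_inner_eq_zero _ k hinner,
    Function.update_self, Function.update_comp_eq_of_notMem_range _ _ (by simp),
    Real.sqrt_mul (sq_nonneg _), Real.sqrt_sq (norm_nonneg _)]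

end Gram

theorem vectorSpan_range_eq_span_range_vsub_zero {k V P : Type*} [Ring k] [AddCommGroup V]
    [Module k V] [AddTorsor V P] {n : ℕ} (p : Fin (n + 1) → P) :
    vectorSpan k (Set.range p) = span k (Set.range fun j : Fin n => p j.succ -ᵥ p 0) := by
  have h : (fun i => p i -ᵥ p 0) = Fin.cons 0 fun j : Fin n => p j.succ -ᵥ p 0 := by
    funext i
    cases i using Fin.cases <;> simp
  rw [vectorSpan_range_eq_span_range_vsub_right k p 0, h, Fin.range_cons, span_insert_zero]

theorem stmt_7_general {H : Type*} [NormedAddCommGroup H] [InnerProductSpace ℝ H]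
    (d : ℕ) (X : Fin (d + 2) → H) (i : Fin (d + 2)) (hi : i ≠ 0) :
    gramContent (fun j : Fin (d + 1) => X j.succ - X 0) /
        ∏ j : Fin (d + 1), ‖X j.succ - X 0‖ =
      (Metric.infDist (X i) (affineSpan ℝ (Set.range (X ∘ i.succAbove)) : Set H) /
          ‖X i - X 0‖) *
        (gramContent (fun j : Fin d => X (i.succAbove j.succ) - X 0) /
          ∏ j : Fin d, ‖X (i.succAbove j.succ) - X 0‖) := by
  obtain ⟨k, rfl⟩ := Fin.exists_succ_eq.2 hi
  set v : Fin (d + 1) → H := fun j => X j.succ - X 0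
  set s := affineSpan ℝ (Set.range (X ∘ k.succ.succAbove))
  have hv : (fun j : Fin d => X (k.succ.succAbove j.succ) - X 0) = v ∘ k.succAbove := by
    funext j
    simp [v, Fin.succ_succAbove_succ]
  have hdir : s.direction = span ℝ (Set.range (v ∘ k.succAbove)) := by
    rw [direction_affineSpan, vectorSpan_range_eq_span_range_vsub_zero, ← hv]
    simp [vsub_eq_sub]
  have hX0 : X 0 ∈ s := mem_affineSpan ℝ ⟨0, by simp⟩
  have : Nonempty s := ⟨⟨_, hX0⟩⟩
  set p : H := ↑(orthogonalProjection s (X k.succ))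
  have hfoot : v k - (p - X 0) = X k.succ - p := by simp [v]
  have hcontent := gramContent_eq_norm_sub_mul v k (w := p - X 0)
    (hdir ▸ AffineSubspace.vsub_mem_direction (orthogonalProjection_mem _) hX0)
    (by rw [hfoot, ← hdir]; exact vsub_orthogonalProjection_mem_direction_orthogonal s _)
  rw [hfoot, ← dist_eq_norm, dist_orthogonalProjection_eq_infDist] at hcontent
  simp_rw [hv, hcontent, Fin.prod_univ_succAbove _ k, mul_div_mul_comm, Fin.succ_succAbove_succ]

/-- The product formula for the polar sine: for `1 ≤ i ≤ d+1`,
`p_d sin_{x_0}(X) = sin(θ_i(X)) · p_{d-1} sin_{x_0}(X(i))`, where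
`sin(θ_i(X)) = dist(x_i, aff(X(i)))/‖x_i − x_0‖` is the elevation sine. -/
theorem stmt_7 {H : Type*} [NormedAddCommGroup H] [InnerProductSpace ℝ H] [CompleteSpace H]
    (d : ℕ) (X : Fin (d + 2) → H) (hX : Function.Injective X)
    (hXa : AffineIndependent ℝ X) (i : Fin (d + 2)) (hi : i ≠ 0) :
    gramContent (fun j : Fin (d + 1) => X j.succ - X 0) /
        ∏ j : Fin (d + 1), ‖X j.succ - X 0‖ =
      (Metric.infDist (X i) (affineSpan ℝ (Set.range (X ∘ i.succAbove)) : Set H) /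
          ‖X i - X 0‖) *
        (gramContent (fun j : Fin d => X (i.succAbove j.succ) - X 0) /
          ∏ j : Fin d, ‖X (i.succAbove j.succ) - X 0‖) :=
  stmt_7_general d X i hi
end

section
/- Subadditivity of facet content: for a (d+1)-simplex with vertices x_0, …, x_{d+1} in a real Hilbert space, the d-dimensional content of any facet is at most the sum of the d-dimensional contents of the other d+1 facets; consequently max over all d+2 facets of the d-content is at most (d+1) times the max over the d+1 facets not containing a fixed distinguished facet index. -/
open Matrix Module

def edgeVectors {V : Type*} [Sub V] {n : ℕ} (z : Fin (n + 1) → V) : Fin n → V :=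
  fun j => z j.succ - z 0

section Cross

variable {R : Type*} [CommRing R] {d : ℕ}

def generalizedCross (v : Fin d → Fin (d + 1) → R) : Fin (d + 1) → R :=
  fun j => (of (Fin.cons (Pi.single j 1) v)).det

theorem adjugate_of_cons_apply_zero (w : Fin (d + 1) → R) (v : Fin d → Fin (d + 1) → R)
    (j : Fin (d + 1)) : adjugate (of (Fin.cons w v)) j 0 = generalizedCross v j := by
  rw [adjugate_apply, generalizedCross]
  congr 1
  ext a b
  refine Fin.cases ?_ (fun a => ?_) a <;> simp

theorem cons_dotProduct_generalizedCross (w : Fin (d + 1) → R) (v : Fin d → Fin (d + 1) → R)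
    (i : Fin (d + 1)) :
    (Fin.cons w v : Fin (d + 1) → Fin (d + 1) → R) i ⬝ᵥ generalizedCross v =
      (of (Fin.cons w v)).det * (1 : Matrix (Fin (d + 1)) (Fin (d + 1)) R) i 0 := by
  have h := congrFun₂ (mul_adjugate (of (Fin.cons w v : Fin (d + 1) → Fin (d + 1) → R))) i 0
  simpa [mul_apply, dotProduct, adjugate_of_cons_apply_zero] using h

theorem dotProduct_generalizedCross (w : Fin (d + 1) → R) (v : Fin d → Fin (d + 1) → R) :
    w ⬝ᵥ generalizedCross v = (of (Fin.cons w v)).det := by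
  simpa using cons_dotProduct_generalizedCross w v 0

theorem dotProduct_generalizedCross_eq_zero (v : Fin d → Fin (d + 1) → R) (k : Fin d) :
    v k ⬝ᵥ generalizedCross v = 0 := by
  simpa using cons_dotProduct_generalizedCross 0 v k.succ

theorem det_of_cons_sq {w : Fin (d + 1) → R} {v : Fin d → Fin (d + 1) → R}
    (hw : ∀ k, v k ⬝ᵥ w = 0) :
    (of (Fin.cons w v)).det ^ 2 = (w ⬝ᵥ w) * (of v * (of v)ᵀ).det := by
  set B := of (Fin.cons w v : Fin (d + 1) → Fin (d + 1) → R)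
  have hrow : ∀ k : Fin d, (B * Bᵀ) 0 k.succ = 0 := fun k => by
    simpa [B, mul_apply, dotProduct, mul_comm] using hw k
  have hminor : (B * Bᵀ).submatrix Fin.succ Fin.succ = of v * (of v)ᵀ := by
    ext a b; simp [B, mul_apply]
  have hB : B.det ^ 2 = (B * Bᵀ).det := by rw [det_mul, det_transpose, sq]
  rw [hB, det_succ_row_zero, Fin.sum_univ_succ]
  simp only [hrow, Fin.succAbove_zero, hminor, mul_zero, zero_mul, Finset.sum_const_zero, add_zero]
  simp [B, mul_apply, dotProduct]

theorem dotProduct_self_generalizedCross {K : Type*} [Field K] [LinearOrder K]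
    [IsStrictOrderedRing K] (v : Fin d → Fin (d + 1) → K) :
    generalizedCross v ⬝ᵥ generalizedCross v = (of v * (of v)ᵀ).det := by
  have hc := det_of_cons_sq (dotProduct_generalizedCross_eq_zero v)
  rw [← dotProduct_generalizedCross] at hc
  set c := generalizedCross v ⬝ᵥ generalizedCross v
  rcases eq_or_ne c 0 with hc0 | hc0
  · -- a nonzero vector orthogonal to the rows of `v` spans with them a degenerate matrix
    obtain ⟨w, hw0, hw⟩ : ∃ w ≠ 0, of (Fin.cons 0 v : Fin (d + 1) → Fin (d + 1) → K) *ᵥ w = 0 :=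
      exists_mulVec_eq_zero_iff.mpr (det_eq_zero_of_row_eq_zero 0 fun _ => rfl)
    have hwv : ∀ k, v k ⬝ᵥ w = 0 := fun k => by simpa [mulVec] using congrFun hw k.succ
    have hdet := det_of_cons_sq hwv
    rw [← dotProduct_generalizedCross, dotProduct_self_eq_zero.mp hc0, dotProduct_zero] at hdet
    have hww : w ⬝ᵥ w ≠ 0 := mt dotProduct_self_eq_zero.mp hw0
    rw [hc0, eq_comm]
    simpa [hww] using hdet.symm
  · exact (mul_left_cancel₀ hc0 (by rw [← sq, hc])).symm

def borderedMatrix {m n : ℕ} (r : Fin n → R) (z : Fin m → Fin n → R) :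
    Matrix (Fin (m + 1)) (Fin (n + 1)) R :=
  of (Fin.cons (Fin.cons 0 r) fun k => Fin.cons 1 (z k))

theorem det_borderedMatrix (r : Fin (d + 1) → R) (z : Fin (d + 1) → Fin (d + 1) → R) :
    (borderedMatrix r z).det = -(of (Fin.cons r (edgeVectors z))).det := by
  -- subtracting the row `(1, z 0)` from the rows below it leaves a single `1` in column `0`
  set B : Matrix (Fin (d + 2)) (Fin (d + 2)) R :=
    of (Fin.cons (Fin.cons 0 r)
      (Fin.cons (Fin.cons 1 (z 0)) fun j => Fin.cons 0 (edgeVectors z j)))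
  have hB : (borderedMatrix r z).det = B.det := by
    refine det_eq_of_forall_row_eq_smul_add_const (Fin.cons 0 (Fin.cons 0 1)) 1 rfl fun i j => ?_
    refine Fin.cases ?_ (fun i => Fin.cases ?_ (fun k => ?_) i) i <;>
      refine Fin.cases ?_ (fun c => ?_) j <;> simp [borderedMatrix, B, edgeVectors]
  have hminor :
      B.submatrix (1 : Fin (d + 2)).succAbove Fin.succ = of (Fin.cons r (edgeVectors z)) := by
    ext a c
    exact Fin.cases rfl (fun a => rfl) a
  rw [hB, det_succ_column_zero, Fin.sum_univ_succ, Fin.sum_univ_succ]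
  simp [B, hminor]

theorem sum_alternating_det_borderedMatrix (r : Fin (d + 1) → R)
    (Y : Fin (d + 2) → Fin (d + 1) → R) :
    ∑ m : Fin (d + 2), (-1) ^ (m : ℕ) * (borderedMatrix r (Y ∘ m.succAbove)).det = 0 := by
  -- expand along its first column a matrix whose first two columns coincide
  set w : Fin (d + 3) → Fin (d + 2) → R := borderedMatrix r Y
  set M : Matrix (Fin (d + 3)) (Fin (d + 3)) R := of fun a => Fin.cons (w a 0) (w a)
  have hM : M.det = 0 := det_zero_of_column_eq (Fin.zero_ne_one) fun a => rfl
  have hminor : ∀ m : Fin (d + 2),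
      M.submatrix m.succ.succAbove Fin.succ = borderedMatrix r (Y ∘ m.succAbove) := by
    intro m
    ext a c
    refine Fin.cases ?_ (fun a => ?_) a <;> simp [M, w, borderedMatrix]
  rw [det_succ_column_zero, Fin.sum_univ_succ] at hM
  simp only [hminor] at hM
  simpa [M, w, borderedMatrix, pow_succ] using hM

theorem sum_alternating_generalizedCross_edgeVectors (Y : Fin (d + 2) → Fin (d + 1) → R) :
    ∑ m : Fin (d + 2), (-1 : R) ^ (m : ℕ) • generalizedCross (edgeVectors (Y ∘ m.succAbove)) =
      0 := by
  ext j
  have h := sum_alternating_det_borderedMatrix (Pi.single j 1) Y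
  simp only [det_borderedMatrix, mul_neg, Finset.sum_neg_distrib, neg_eq_zero] at h
  simpa [Finset.sum_apply, generalizedCross] using h

end Cross

theorem exists_linearIsometry_euclideanSpace {𝕜 E : Type*} [RCLike 𝕜] [NormedAddCommGroup E]
    [InnerProductSpace 𝕜 E] [FiniteDimensional 𝕜 E] {n : ℕ} (h : finrank 𝕜 E ≤ n) :
    Nonempty (E →ₗᵢ[𝕜] EuclideanSpace 𝕜 (Fin n)) := by
  let b := stdOrthonormalBasis 𝕜 E
  let e : Fin (finrank 𝕜 E) → EuclideanSpace 𝕜 (Fin n) :=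
    fun i => EuclideanSpace.single (Fin.castLE h i) 1
  have he : Orthonormal 𝕜 e :=
    EuclideanSpace.orthonormal_single.comp _ (Fin.castLE_injective h)
  refine ⟨(b.toBasis.constr 𝕜 e).isometryOfOrthonormal (v := b.toBasis) ?_ ?_⟩
  · simpa only [OrthonormalBasis.coe_toBasis] using b.orthonormal
  · convert he
    ext i : 1
    simp

theorem exists_euclideanSpace_inner_sub_eq {H : Type*} [NormedAddCommGroup H]
    [InnerProductSpace ℝ H] {n : ℕ} (X : Fin (n + 1) → H) :
    ∃ Y : Fin (n + 1) → EuclideanSpace ℝ (Fin n), ∀ a b c e,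
      inner ℝ (Y a - Y b) (Y c - Y e) = inner ℝ (X a - X b) (X c - X e) := by
  let T := vectorSpan ℝ (Set.range X)
  obtain ⟨f⟩ := exists_linearIsometry_euclideanSpace
    (finrank_vectorSpan_range_le ℝ X (Fintype.card_fin _))
  let t : Fin (n + 1) → Fin (n + 1) → T := fun a b =>
    ⟨X a - X b, vsub_mem_vectorSpan ℝ (Set.mem_range_self a) (Set.mem_range_self b)⟩
  refine ⟨fun a => f (t a 0), fun a b c e => ?_⟩
  have ht : ∀ a b, t a 0 - t b 0 = t a b := fun a b => Subtype.ext (sub_sub_sub_cancel_right _ _ _)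
  rw [← map_sub, ← map_sub, ht, ht, f.inner_map_map]
  rfl

theorem norm_le_sum_erase_norm_of_sum_eq_zero {ι E : Type*} [Fintype ι] [DecidableEq ι]
    [SeminormedAddCommGroup E] {N : ι → E} (h : ∑ i, N i = 0) (i : ι) :
    ‖N i‖ ≤ ∑ k ∈ Finset.univ.erase i, ‖N k‖ := by
  have hi : N i = -∑ k ∈ Finset.univ.erase i, N k :=
    eq_neg_of_add_eq_zero_left ((Finset.add_sum_erase _ _ (Finset.mem_univ i)).trans h)
  rw [hi, norm_neg]
  exact norm_sum_le _ _

theorem norm_toLp_generalizedCross {d : ℕ} (u : Fin d → EuclideanSpace ℝ (Fin (d + 1))) :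
    ‖WithLp.toLp 2 (generalizedCross fun j => WithLp.ofLp (u j))‖ = gramContent u := by
  rw [norm_eq_sqrt_real_inner, EuclideanSpace.inner_toLp_toLp, star_trivial,
    dotProduct_self_generalizedCross, gramContent]
  congr 2
  ext a b
  simp [mul_apply, EuclideanSpace.inner_eq_star_dotProduct, dotProduct, mul_comm]

theorem gramContent_edgeVectors_le_sum_erase {d : ℕ}
    (Y : Fin (d + 2) → EuclideanSpace ℝ (Fin (d + 1))) (i : Fin (d + 2)) :
    gramContent (edgeVectors (Y ∘ i.succAbove)) ≤
      ∑ k ∈ Finset.univ.erase i, gramContent (edgeVectors (Y ∘ k.succAbove)) := by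
  let N : Fin (d + 2) → EuclideanSpace ℝ (Fin (d + 1)) := fun m =>
    (-1 : ℝ) ^ (m : ℕ) • WithLp.toLp 2
      (generalizedCross (edgeVectors ((WithLp.ofLp ∘ Y) ∘ m.succAbove)))
  have hN : ∀ m, ‖N m‖ = gramContent (edgeVectors (Y ∘ m.succAbove)) := fun m => by
    rw [norm_smul, norm_pow, norm_neg, norm_one, one_pow, one_mul, ← norm_toLp_generalizedCross]
    rfl
  have hsum : ∑ m, N m = 0 := by
    simp only [N, ← WithLp.toLp_smul, ← WithLp.toLp_sum,
      sum_alternating_generalizedCross_edgeVectors, WithLp.toLp_zero]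
  simpa only [hN] using norm_le_sum_erase_norm_of_sum_eq_zero hsum i

theorem gramContent_congr {H H' : Type*} [NormedAddCommGroup H] [InnerProductSpace ℝ H]
    [NormedAddCommGroup H'] [InnerProductSpace ℝ H'] {n : ℕ} {u : Fin n → H} {v : Fin n → H'}
    (h : ∀ i j, inner ℝ (u i) (u j) = inner ℝ (v i) (v j)) : gramContent u = gramContent v := by
  simp only [gramContent, h]

theorem gramContent_facet_le_sum_erase {H : Type*} [NormedAddCommGroup H]
    [InnerProductSpace ℝ H] {d : ℕ} (X : Fin (d + 2) → H) (i : Fin (d + 2)) :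
    gramContent (edgeVectors (X ∘ i.succAbove)) ≤
      ∑ k ∈ Finset.univ.erase i, gramContent (edgeVectors (X ∘ k.succAbove)) := by
  obtain ⟨Y, hY⟩ := exists_euclideanSpace_inner_sub_eq X
  have hXY : ∀ m : Fin (d + 2), gramContent (edgeVectors (X ∘ m.succAbove)) =
      gramContent (edgeVectors (Y ∘ m.succAbove)) :=
    fun m => gramContent_congr fun a b => (hY _ _ _ _).symm
  simpa only [hXY] using gramContent_edgeVectors_le_sum_erase Y i

theorem sup'_le_mul_sup'_succAbove_of_le_sum_erase {n : ℕ} {f : Fin (n + 2) → ℝ}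
    (hf : ∀ i, 0 ≤ f i) {i₀ : Fin (n + 2)} (h : f i₀ ≤ ∑ k ∈ Finset.univ.erase i₀, f k) :
    Finset.univ.sup' Finset.univ_nonempty f ≤
      (n + 1) * Finset.univ.sup' Finset.univ_nonempty fun m => f (i₀.succAbove m) := by
  set S := Finset.univ.sup' Finset.univ_nonempty fun m => f (i₀.succAbove m)
  have hS : ∀ m, f (i₀.succAbove m) ≤ S := fun m =>
    Finset.le_sup' (fun m => f (i₀.succAbove m)) (Finset.mem_univ m)
  have hS0 : 0 ≤ S := (hf _).trans (hS 0)
  refine Finset.sup'_le _ _ fun i _ => ?_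
  rcases Fin.eq_self_or_eq_succAbove i₀ i with rfl | ⟨m, rfl⟩
  · calc f i ≤ ∑ k ∈ Finset.univ.erase i, f k := h
      _ = ∑ m, f (i.succAbove m) := add_left_cancel
          ((Finset.add_sum_erase _ _ (Finset.mem_univ i)).trans (Fin.sum_univ_succAbove f i))
      _ ≤ ∑ _m : Fin (n + 1), S := Finset.sum_le_sum fun m _ => hS m
      _ = (n + 1) * S := by simp
  · exact (hS m).trans (le_mul_of_one_le_left hS0 (by simp))

/-- Subadditivity of facet content: the `d`-content of any facet of a
`(d+1)`-simplex is at most the sum of the `d`-contents of the other facets;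
consequently the maximal facet content is at most `(d+1)` times the maximum over
the facets other than a fixed distinguished one. -/
theorem stmt_15 {H : Type*} [NormedAddCommGroup H] [InnerProductSpace ℝ H]
    (d : ℕ) (X : Fin (d + 2) → H) :
    (∀ i : Fin (d + 2),
      gramContent (fun j : Fin d => X (i.succAbove j.succ) - X (i.succAbove 0)) ≤
        ∑ k ∈ Finset.univ.erase i,
          gramContent (fun j : Fin d => X (k.succAbove j.succ) - X (k.succAbove 0))) ∧
    ∀ i₀ : Fin (d + 2),
      (Finset.univ.sup' Finset.univ_nonempty fun i : Fin (d + 2) =>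
          gramContent (fun j : Fin d => X (i.succAbove j.succ) - X (i.succAbove 0))) ≤
        (d + 1) *
          (Finset.univ.sup' Finset.univ_nonempty fun m : Fin (d + 1) =>
            gramContent (fun j : Fin d =>
              X ((i₀.succAbove m).succAbove j.succ) - X ((i₀.succAbove m).succAbove 0))) := by
  have hfacet := gramContent_facet_le_sum_erase X
  exact ⟨hfacet, fun i₀ =>
    sup'_le_mul_sup'_succAbove_of_le_sum_erase (fun _ => Real.sqrt_nonneg _) (hfacet i₀)⟩
end
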